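/- arXiv:1401.3193 — 3 statements merged into one kernel-verified Lean document; each statement's English description precedes it below -/
import Mathlib

section
/- Let $U(t)$ be a smooth family of symmetric $n\times n$ real matrices defined on an interval $I \subseteq \mathbb{R}$ satisfying the Lyapunov differential inequality $\dot U(t) \geq \theta(t) U(t) + U(t) \theta(t)^*$ for all $t \in I$, where $\theta(t)$ is a smooth family of $n\times n$ matrices. If $U(t_0) \geq 0$ for some $t_0 \in I$, then $U(t) \geq 0$ for all $t \in I \cap [t_0, +\infty)$. -/
open Matrix Set Filter Topology

lemma quadform_formula {n : ℕ} (A : Matrix (Fin n) (Fin n) ℝ) (x : Fin n → ℝ) :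
    x ⬝ᵥ A *ᵥ x = ∑ i, ∑ j, x i * (A i j * x j) := by
  simp [dotProduct, mulVec, Finset.mul_sum]

lemma quadform_continuous {n : ℕ} (A : Matrix (Fin n) (Fin n) ℝ) :
    Continuous fun x : Fin n → ℝ => x ⬝ᵥ A *ᵥ x := by
  simp only [quadform_formula]
  exact continuous_finset_sum _ fun i _ => continuous_finset_sum _ fun j _ =>
    (continuous_apply i).mul (continuous_const.mul (continuous_apply j))

lemma quad_abs_le {n : ℕ} (A : Matrix (Fin n) (Fin n) ℝ) (M : ℝ) (hM0 : 0 ≤ M)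
    (hM : ∀ i j, |A i j| ≤ M) (x : Fin n → ℝ) :
    |x ⬝ᵥ A *ᵥ x| ≤ n * M * ∑ i, x i ^ 2 := by
  rw [quadform_formula]
  calc |∑ i, ∑ j, x i * (A i j * x j)| ≤ ∑ i, ∑ j, |x i * (A i j * x j)| := by
        exact (Finset.abs_sum_le_sum_abs _ _).trans
          (Finset.sum_le_sum fun i _ => Finset.abs_sum_le_sum_abs _ _)
    _ ≤ ∑ i, ∑ j, |x i| * (M * |x j|) := by
        refine Finset.sum_le_sum fun i _ => Finset.sum_le_sum fun j _ => ?_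
        rw [abs_mul, abs_mul]
        exact mul_le_mul_of_nonneg_left
          (mul_le_mul_of_nonneg_right (hM i j) (abs_nonneg _)) (abs_nonneg _)
    _ = M * (∑ i, |x i|) ^ 2 := by
        simp only [← Finset.mul_sum, ← Finset.sum_mul]
        ring
    _ ≤ M * (n * ∑ i, |x i| ^ 2) := by
        refine mul_le_mul_of_nonneg_left ?_ hM0
        simpa using sq_sum_le_card_mul_sum_sq (s := Finset.univ) (f := fun i => |x i|)
    _ = n * M * ∑ i, x i ^ 2 := by
        simp only [sq_abs]; ring

lemma posDef_of_entries_close {n : ℕ} {A : Matrix (Fin n) (Fin n) ℝ} (hA : A.PosDef) :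
    ∃ δ > 0, ∀ B : Matrix (Fin n) (Fin n) ℝ, B.IsHermitian →
      (∀ i j, |B i j - A i j| ≤ δ) → B.PosDef := by
  rcases Nat.eq_zero_or_pos n with hn | hn
  · refine ⟨1, one_pos, fun B hB _ => Matrix.PosDef.of_dotProduct_mulVec_pos hB fun x hx => ?_⟩
    subst hn
    exact absurd (funext fun i => i.elim0) hx
  · -- the unit "sphere" for the sum-of-squares
    set Sp : Set (Fin n → ℝ) := {x | ∑ i, x i ^ 2 = 1} with hSp
    have hcont : Continuous fun x : Fin n → ℝ => ∑ i, x i ^ 2 :=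
      continuous_finset_sum _ fun i _ => (continuous_apply i).pow 2
    have hclosed : IsClosed Sp := isClosed_eq hcont continuous_const
    have hbdd : Bornology.IsBounded Sp := by
      refine (Metric.isBounded_iff_subset_closedBall 0).2 ⟨1, fun x hx => ?_⟩
      simp only [Metric.mem_closedBall, dist_zero_right]
      rw [pi_norm_le_iff_of_nonneg zero_le_one]
      intro i
      rw [Real.norm_eq_abs, abs_le_one_iff_mul_self_le_one, ← sq]
      calc x i ^ 2 ≤ ∑ j, x j ^ 2 :=
            Finset.single_le_sum (fun j _ => sq_nonneg (x j)) (Finset.mem_univ i)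
        _ = 1 := hx
    have hcpt : IsCompact Sp := Metric.isCompact_of_isClosed_isBounded hclosed hbdd
    have hne : Sp.Nonempty := by
      refine ⟨Pi.single ⟨0, hn⟩ 1, ?_⟩
      simp [hSp, Pi.single_apply, Finset.sum_ite_eq']
    obtain ⟨x₀, hx₀S, hx₀min'⟩ :=
      hcpt.exists_isMinOn hne (quadform_continuous A).continuousOn
    have hx₀min : ∀ y ∈ Sp, x₀ ⬝ᵥ A *ᵥ x₀ ≤ y ⬝ᵥ A *ᵥ y := fun y hy => hx₀min' hy
    set m := x₀ ⬝ᵥ A *ᵥ x₀ with hm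
    have hx₀ne : x₀ ≠ 0 := by
      intro h
      rw [h] at hx₀S
      simp [hSp] at hx₀S
    have hmpos : 0 < m := by simpa [star_trivial] using hA.dotProduct_mulVec_pos hx₀ne
    refine ⟨m / (2 * (n + 1)), by positivity, fun B hB hclose => Matrix.PosDef.of_dotProduct_mulVec_pos hB fun x hx => ?_⟩
    -- reduce to the sphere
    have key : ∀ y ∈ Sp, 0 < y ⬝ᵥ B *ᵥ y := by
      intro y hy
      have h1 : |y ⬝ᵥ (B - A) *ᵥ y| ≤ n * (m / (2 * (n + 1))) * ∑ i, y i ^ 2 :=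
        quad_abs_le _ _ (by positivity) (fun i j => by simpa using hclose i j) y
      rw [hy] at h1
      have h2 : y ⬝ᵥ (B - A) *ᵥ y = y ⬝ᵥ B *ᵥ y - y ⬝ᵥ A *ᵥ y := by
        rw [sub_mulVec, dotProduct_sub]
      have h3 : m ≤ y ⬝ᵥ A *ᵥ y := hx₀min y hy
      have h4 : (n : ℝ) * (m / (2 * ((n:ℝ) + 1))) < m := by
        have h5 : (n:ℝ) / (2 * ((n:ℝ)+1)) < 1 := by
          rw [div_lt_one (by positivity)]
          nlinarith [Nat.cast_nonneg (α := ℝ) n]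
        calc (n:ℝ) * (m / (2*((n:ℝ)+1))) = m * ((n:ℝ)/(2*((n:ℝ)+1))) := by ring
          _ < m * 1 := mul_lt_mul_of_pos_left h5 hmpos
          _ = m := mul_one m
      have := abs_le.1 h1
      nlinarith [this.1]
    have hr : 0 < ∑ i, x i ^ 2 := by
      have : ∃ i, x i ≠ 0 := by
        by_contra h
        push_neg at h
        exact hx (funext h)
      obtain ⟨i, hi⟩ := this
      exact Finset.sum_pos' (fun j _ => sq_nonneg _) ⟨i, Finset.mem_univ i, by positivity⟩
    set r := Real.sqrt (∑ i, x i ^ 2) with hrdef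
    have hrpos : 0 < r := Real.sqrt_pos.2 hr
    have hy : (r⁻¹ • x) ∈ Sp := by
      simp only [hSp, mem_setOf_eq, Pi.smul_apply, smul_eq_mul, mul_pow, ← Finset.mul_sum]
      rw [hrdef]
      rw [inv_pow, Real.sq_sqrt hr.le, inv_mul_cancel₀ hr.ne']
    have := key _ hy
    have hexp : (r⁻¹ • x) ⬝ᵥ B *ᵥ (r⁻¹ • x) = r⁻¹ * (r⁻¹ * (x ⬝ᵥ B *ᵥ x)) := by
      rw [mulVec_smul, dotProduct_smul, smul_dotProduct]
      simp [smul_eq_mul, mul_assoc]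
    rw [hexp] at this
    have h2 := mul_pos (mul_pos hrpos hrpos) this
    have hrne : r ≠ 0 := hrpos.ne'
    have hrr : r * r * (r⁻¹ * (r⁻¹ * (x ⬝ᵥ B *ᵥ x))) = x ⬝ᵥ B *ᵥ x := by
      field_simp
    rw [hrr] at h2
    rw [star_trivial]
    exact h2

lemma sum_sq_pos {n : ℕ} {x : Fin n → ℝ} (hx : x ≠ 0) : 0 < ∑ i, x i ^ 2 := by
  obtain ⟨i, hi⟩ : ∃ i, x i ≠ 0 := by
    by_contra h; push_neg at h; exact hx (funext h)
  exact Finset.sum_pos' (fun j _ => sq_nonneg _) ⟨i, Finset.mem_univ i, by positivity⟩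

lemma quad_smul_one {n : ℕ} (c : ℝ) (x : Fin n → ℝ) :
    x ⬝ᵥ (c • (1 : Matrix (Fin n) (Fin n) ℝ)) *ᵥ x = c * ∑ i, x i ^ 2 := by
  rw [smul_mulVec, one_mulVec, dotProduct_smul, smul_eq_mul]
  congr 1
  simp [dotProduct, sq]

/-- Lyapunov differential inequality: if a symmetric matrix family `U` satisfies
`U̇ ≥ θ U + U θᵀ` on an interval `I` and `U t₀ ≥ 0`, then `U t ≥ 0` for all later
times in `I`. -/
theorem lyapunov_ineq_posSemidef (n : ℕ) (I : Set ℝ) (hI : I.OrdConnected)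
    (U U' θ : ℝ → Matrix (Fin n) (Fin n) ℝ)
    (hθ : ContinuousOn θ I)
    (hU' : ContinuousOn U' I)
    (hsymm : ∀ t ∈ I, (U t).IsSymm)
    (hderiv : ∀ t ∈ I, ∀ i j, HasDerivWithinAt (fun s => U s i j) (U' t i j) I t)
    (hineq : ∀ t ∈ I, (U' t - θ t * U t - U t * (θ t)ᵀ).PosSemidef)
    (t₀ : ℝ) (ht₀ : t₀ ∈ I) (h0 : (U t₀).PosSemidef) :
    ∀ t ∈ I ∩ Ici t₀, (U t).PosSemidef := by
  have hUcont : ∀ (i j : Fin n), ContinuousOn (fun r => U r i j) I :=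
    fun i j r hr => (hderiv r hr i j).continuousWithinAt
  rintro t₁ ⟨ht₁I, ht₁0⟩
  replace ht₁0 : t₀ ≤ t₁ := ht₁0
  set K : Set ℝ := Icc t₀ t₁ with hK
  have hKI : K ⊆ I := hI.out ht₀ ht₁I
  have hKcpt : IsCompact K := isCompact_Icc
  have hKne : K.Nonempty := nonempty_Icc.2 ht₁0
  -- bound the entries of θ on K
  have hθentry : ∀ (i j : Fin n), ContinuousOn (fun r => θ r i j) I := by
    intro i j
    have h1 : Continuous (fun A : Matrix (Fin n) (Fin n) ℝ => A i j) :=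
      (continuous_apply j).comp (continuous_apply i)
    exact h1.comp_continuousOn hθ
  have hgcont : ContinuousOn (fun r => ∑ i, ∑ j, |θ r i j|) K :=
    continuousOn_finset_sum _ fun i _ => continuousOn_finset_sum _ fun j _ =>
      ((hθentry i j).mono hKI).abs
  obtain ⟨tM, htM, hgM'⟩ := hKcpt.exists_isMaxOn hKne hgcont
  set M := ∑ i, ∑ j, |θ tM i j| with hM
  have hgM : ∀ r ∈ K, (∑ i, ∑ j, |θ r i j|) ≤ M := fun r hr => hgM' hr
  have hM0 : 0 ≤ M := Finset.sum_nonneg fun i _ => Finset.sum_nonneg fun j _ => abs_nonneg _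
  have hθbound : ∀ r ∈ K, ∀ i j, |θ r i j| ≤ M := by
    intro r hr i j
    calc |θ r i j| ≤ ∑ j', |θ r i j'| :=
          Finset.single_le_sum (f := fun j' => |θ r i j'|)
            (fun _ _ => abs_nonneg _) (Finset.mem_univ j)
      _ ≤ ∑ i', ∑ j', |θ r i' j'| :=
          Finset.single_le_sum (f := fun i' => ∑ j', |θ r i' j'|)
            (fun _ _ => Finset.sum_nonneg fun _ _ => abs_nonneg _) (Finset.mem_univ i)
      _ ≤ M := hgM r hr
  set C : ℝ := 2 * n * M + 1 with hC
  have key : ∀ ε > 0, ∀ s ∈ K,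
      (U s + (ε * Real.exp (C * s)) • (1 : Matrix (Fin n) (Fin n) ℝ)).PosDef := by
    intro ε hε
    set V : ℝ → Matrix (Fin n) (Fin n) ℝ := fun r => U r + (ε * Real.exp (C * r)) • 1 with hV
    have hsmulherm : ∀ (c : ℝ), ((c • (1 : Matrix (Fin n) (Fin n) ℝ))).IsHermitian := by
      intro c
      rw [Matrix.IsHermitian, conjTranspose_eq_transpose_of_trivial, transpose_smul, transpose_one]
    have hVherm : ∀ r ∈ I, (V r).IsHermitian := by
      intro r hr
      have h1 : (U r).IsHermitian := by
        rw [Matrix.IsHermitian, conjTranspose_eq_transpose_of_trivial]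
        exact hsymm r hr
      exact h1.add (hsmulherm _)
    have hVcont : ∀ (i j : Fin n), ContinuousOn (fun r => V r i j) I := by
      intro i j
      have h2 : ContinuousOn (fun r => ε * Real.exp (C * r) * (1 : Matrix (Fin n) (Fin n) ℝ) i j) I :=
        ((continuous_const.mul (Real.continuous_exp.comp
          (continuous_const.mul continuous_id))).mul continuous_const).continuousOn
      have heq : (fun r => V r i j)
          = fun r => U r i j + ε * Real.exp (C * r) * (1 : Matrix (Fin n) (Fin n) ℝ) i j := by
        funext r
        simp [hV, Matrix.add_apply, Matrix.smul_apply, smul_eq_mul]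
      rw [heq]
      exact (hUcont i j).add h2
    have hfq : ∀ (y : Fin n → ℝ), ContinuousOn (fun r => y ⬝ᵥ V r *ᵥ y) I := by
      intro y
      simp only [quadform_formula]
      exact continuousOn_finset_sum _ fun i _ => continuousOn_finset_sum _ fun j _ =>
        continuousOn_const.mul ((hVcont i j).mul continuousOn_const)
    by_contra hbad
    push_neg at hbad
    obtain ⟨s₁, hs₁K, hs₁⟩ := hbad
    set Bad : Set ℝ := {r | r ∈ K ∧ ¬ (V r).PosDef} with hBad
    have hBadK : Bad ⊆ K := fun r hr => hr.1
    have hBadne : Bad.Nonempty := ⟨s₁, hs₁K, hs₁⟩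
    have hBadbdd : BddBelow Bad := ⟨t₀, fun r hr => hr.1.1⟩
    set s := sInf Bad with hs
    have hscl : s ∈ closure Bad := csInf_mem_closure hBadne hBadbdd
    have hsK : s ∈ K := isClosed_Icc.closure_subset ((closure_mono hBadK) hscl)
    have hsI : s ∈ I := hKI hsK
    have hslb : ∀ r ∈ Bad, s ≤ r := fun r hr => csInf_le hBadbdd hr
    have hVt₀ : (V t₀).PosDef := by
      refine Matrix.PosDef.posSemidef_add h0 (Matrix.PosDef.of_dotProduct_mulVec_pos (hsmulherm _) fun x hx => ?_)
      rw [star_trivial, quad_smul_one]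
      have h1 : 0 < ∑ i, x i ^ 2 := sum_sq_pos hx
      positivity
    have hsnPD : ¬ (V s).PosDef := by
      intro hPD
      obtain ⟨δ, hδ, hst⟩ := posDef_of_entries_close hPD
      have hev : ∀ᶠ r in 𝓝[K] s, ∀ i j, |V r i j - V s i j| ≤ δ := by
        rw [eventually_all]
        intro i
        rw [eventually_all]
        intro j
        have hc : ContinuousWithinAt (fun r => V r i j) K s := ((hVcont i j).mono hKI) s hsK
        filter_upwards [hc (Metric.closedBall_mem_nhds _ hδ)] with r hr
        simpa [Metric.mem_closedBall, Real.dist_eq] using hr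
      haveI : (𝓝[Bad] s).NeBot := mem_closure_iff_nhdsWithin_neBot.1 hscl
      have hev2 : ∀ᶠ r in 𝓝[Bad] s, ∀ i j, |V r i j - V s i j| ≤ δ :=
        hev.filter_mono (nhdsWithin_mono _ hBadK)
      obtain ⟨r, hrB, hrclose⟩ := (eventually_mem_nhdsWithin.and hev2).exists
      exact hrB.2 (hst _ (hVherm r (hKI hrB.1)) hrclose)
    have ht₀s : t₀ < s := lt_of_le_of_ne hsK.1 (fun h => hsnPD (h ▸ hVt₀))
    have hPDlt : ∀ r ∈ Ico t₀ s, (V r).PosDef := by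
      intro r hr
      by_contra h
      have hmem : r ∈ Bad := ⟨⟨hr.1, hr.2.le.trans hsK.2⟩, h⟩
      exact absurd (hslb r hmem) (not_le.2 hr.2)
    have hIcoI : Ico t₀ s ⊆ I := fun r hr => hKI ⟨hr.1, hr.2.le.trans hsK.2⟩
    have hPSDs : (V s).PosSemidef := by
      refine Matrix.PosSemidef.of_dotProduct_mulVec_nonneg (hVherm s hsI) fun y => ?_
      rw [star_trivial]
      have hvc : ContinuousWithinAt (fun r => y ⬝ᵥ V r *ᵥ y) (Ico t₀ s) s :=
        ((hfq y) s hsI).mono hIcoI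
      haveI : (𝓝[Ico t₀ s] s).NeBot := right_nhdsWithin_Ico_neBot ht₀s
      exact ge_of_tendsto hvc (eventually_mem_nhdsWithin.mono fun r hr => by
        simpa [star_trivial] using (hPDlt r hr).posSemidef.dotProduct_mulVec_nonneg y)
    obtain ⟨x, hx0, hxq⟩ : ∃ x ≠ 0, x ⬝ᵥ V s *ᵥ x ≤ 0 := by
      by_contra h
      push_neg at h
      exact hsnPD (Matrix.PosDef.of_dotProduct_mulVec_pos (hVherm s hsI) fun x hx => by rw [star_trivial]; exact h x hx)
    have hxq0 : x ⬝ᵥ V s *ᵥ x = 0 :=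
      le_antisymm hxq (by simpa [star_trivial] using hPSDs.dotProduct_mulVec_nonneg x)
    have hVsx : V s *ᵥ x = 0 := by
      have h := hPSDs.dotProduct_mulVec_zero_iff x
      rw [star_trivial] at h
      exact h.1 hxq0
    set c : ℝ := ε * Real.exp (C * s) with hc
    have hcpos : 0 < c := by positivity
    have hUsx : U s *ᵥ x = -(c • x) := by
      have h : U s *ᵥ x + c • x = 0 := by
        have h2 := hVsx
        rwa [hV, add_mulVec, smul_mulVec, one_mulVec] at h2
      exact eq_neg_of_add_eq_zero_left h
    set Q : ℝ := ∑ i, x i ^ 2 with hQ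
    have hQpos : 0 < Q := sum_sq_pos hx0
    set f : ℝ → ℝ := fun r => x ⬝ᵥ V r *ᵥ x with hf
    have hfeq : ∀ r, f r = (∑ i, ∑ j, x i * (U r i j * x j)) + ε * Real.exp (C * r) * Q := by
      intro r
      rw [hf]
      show x ⬝ᵥ V r *ᵥ x = _
      rw [hV]
      show x ⬝ᵥ (U r + (ε * Real.exp (C * r)) • 1) *ᵥ x = _
      rw [add_mulVec, dotProduct_add, quadform_formula, quad_smul_one]
    set d : ℝ := (∑ i, ∑ j, x i * (U' s i j * x j)) + ε * (Real.exp (C * s) * (C * 1)) * Q with hd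
    have hderf : HasDerivWithinAt f d I s := by
      have h1 : HasDerivWithinAt (fun r => ∑ i, ∑ j, x i * (U r i j * x j))
          (∑ i, ∑ j, x i * (U' s i j * x j)) I s :=
        HasDerivWithinAt.fun_sum fun i _ => HasDerivWithinAt.fun_sum fun j _ =>
          ((hderiv s hsI i j).mul_const (x j)).const_mul (x i)
      have hlin : HasDerivAt (fun r : ℝ => C * r) (C * 1) s := (hasDerivAt_id s).const_mul C
      have h2 : HasDerivAt (fun r => ε * Real.exp (C * r) * Q)
          (ε * (Real.exp (C * s) * (C * 1)) * Q) s := ((hlin.exp).const_mul ε).mul_const Q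
      exact (h1.add h2.hasDerivWithinAt).congr (fun r _ => hfeq r) (hfeq s)
    have hdpos : 0 < d := by
      have hiq := (hineq s hsI).dotProduct_mulVec_nonneg x
      rw [star_trivial, sub_mulVec, sub_mulVec, dotProduct_sub, dotProduct_sub] at hiq
      have hterm1 : x ⬝ᵥ (θ s * U s) *ᵥ x = -(c * (x ⬝ᵥ θ s *ᵥ x)) := by
        rw [← mulVec_mulVec, hUsx, mulVec_neg, mulVec_smul, dotProduct_neg, dotProduct_smul,
          smul_eq_mul]
      have hterm2 : x ⬝ᵥ (U s * (θ s)ᵀ) *ᵥ x = -(c * (x ⬝ᵥ (θ s)ᵀ *ᵥ x)) := by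
        rw [← mulVec_mulVec, dotProduct_mulVec, ← mulVec_transpose, hsymm s hsI, hUsx,
          neg_dotProduct, smul_dotProduct, smul_eq_mul]
      have hb1 : |x ⬝ᵥ θ s *ᵥ x| ≤ n * M * Q :=
        quad_abs_le _ M hM0 (fun i j => hθbound s hsK i j) x
      have hb2 : |x ⬝ᵥ (θ s)ᵀ *ᵥ x| ≤ n * M * Q :=
        quad_abs_le _ M hM0 (fun i j => hθbound s hsK j i) x
      have hsumeq : (∑ i, ∑ j, x i * (U' s i j * x j)) = x ⬝ᵥ U' s *ᵥ x :=
        (quadform_formula _ _).symm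
      rw [hterm1, hterm2] at hiq
      have hce : ε * (Real.exp (C * s) * (C * 1)) * Q = c * (2 * (n : ℝ) * M + 1) * Q := by
        rw [hc, hC]; ring
      rw [hd, hsumeq, hce]
      have e1 := (abs_le.1 hb1).2
      have e2 := (abs_le.1 hb2).2
      nlinarith [mul_le_mul_of_nonneg_left e1 hcpos.le, mul_le_mul_of_nonneg_left e2 hcpos.le,
        mul_pos hcpos hQpos]
    have hIccI : Icc t₀ s ⊆ I := hI.out ht₀ hsI
    have hderf2 : HasDerivWithinAt f d (Icc t₀ s) s := hderf.mono hIccI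
    rw [hasDerivWithinAt_iff_tendsto_slope] at hderf2
    rw [show Icc t₀ s \ {s} = Ico t₀ s from Icc_sdiff_right] at hderf2
    haveI : (𝓝[Ico t₀ s] s).NeBot := right_nhdsWithin_Ico_neBot ht₀s
    have hev := hderf2.eventually (eventually_gt_nhds hdpos)
    obtain ⟨r, hrmem, hrslope⟩ := (eventually_mem_nhdsWithin.and hev).exists
    have hfr : 0 < f r := by
      have h := (hPDlt r hrmem).dotProduct_mulVec_pos hx0
      rwa [star_trivial] at h
    have hfs : f s = 0 := hxq0
    have hneg : slope f s r < 0 := by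
      rw [slope_def_field, hfs, sub_zero]
      exact div_neg_of_pos_of_neg hfr (sub_neg.2 hrmem.2)
    linarith
  -- conclude
  refine Matrix.PosSemidef.of_dotProduct_mulVec_nonneg ?_ ?_
  · rw [Matrix.IsHermitian, conjTranspose_eq_transpose_of_trivial]
    exact hsymm t₁ ht₁I
  intro y
  rw [star_trivial]
  by_contra hneg
  push_neg at hneg
  have hy0 : y ≠ 0 := by
    rintro rfl
    simp at hneg
  set Q : ℝ := ∑ i, y i ^ 2 with hQ
  have hQpos : 0 < Q := sum_sq_pos hy0
  set a : ℝ := y ⬝ᵥ U t₁ *ᵥ y with ha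
  set E : ℝ := Real.exp (C * t₁) with hE
  have hEpos : 0 < E := Real.exp_pos _
  set ε : ℝ := (-a) / (E * Q) with hε
  have hεpos : 0 < ε := by
    apply div_pos
    · linarith
    · positivity
  have hkey := (key ε hεpos t₁ (right_mem_Icc.2 ht₁0)).dotProduct_mulVec_pos hy0
  rw [star_trivial, add_mulVec, dotProduct_add, quad_smul_one] at hkey
  have hεEQ : ε * E * Q = -a := by
    rw [hε]
    field_simp
  rw [← hQ, ← ha, ← hE] at hkey
  linarith
end

section
/- Let $X(t)$ be a symmetric matrix solution of the Riccati differential equation with constant coefficients $\dot X + A^* X + X A + B + X Q X = 0$ (with $A, B, Q$ constant matrices, $B, Q$ symmetric), defined on an interval $[t_0, T)$. If $\dot X(t_0) \geq 0$, then $\dot X(t) \geq 0$ for all $t \in [t_0, T)$; analogously if $\dot X(t_0) \leq 0$ then $\dot X(t) \leq 0$ for all $t \in [t_0, T)$. -/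
open Matrix Set Metric Filter Topology

attribute [local instance] Matrix.normedAddCommGroup Matrix.normedSpace

namespace RiccatiAux

variable {n : ℕ}

lemma hasDerivWithinAt_matrix {f : ℝ → Matrix (Fin n) (Fin n) ℝ}
    {f' : Matrix (Fin n) (Fin n) ℝ} {s : Set ℝ} {t : ℝ} :
    HasDerivWithinAt f f' s t ↔
      ∀ i j, HasDerivWithinAt (fun u => f u i j) (f' i j) s t := by
  constructor
  · intro h i j
    exact hasDerivWithinAt_pi.1 (hasDerivWithinAt_pi.1 h i) j
  · intro h
    exact hasDerivWithinAt_pi.2 fun i => hasDerivWithinAt_pi.2 fun j => h i j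

lemma hasDerivWithinAt_matMul {f g f' g' : ℝ → Matrix (Fin n) (Fin n) ℝ} {s : Set ℝ} {t : ℝ}
    (hf : HasDerivWithinAt f (f' t) s t) (hg : HasDerivWithinAt g (g' t) s t) :
    HasDerivWithinAt (fun u => f u * g u) (f' t * g t + f t * g' t) s t := by
  rw [hasDerivWithinAt_matrix] at hf hg ⊢
  intro i j
  have : ∀ u, (f u * g u) i j = ∑ k, f u i k * g u k j := fun u => Matrix.mul_apply
  have hsum : HasDerivWithinAt (fun u => ∑ k, f u i k * g u k j)
      (∑ k, (f' t i k * g t k j + f t i k * g' t k j)) s t :=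
    HasDerivWithinAt.fun_sum fun k _ => (hf i k).mul (hg k j)
  simpa [Matrix.mul_apply, Matrix.add_apply, Finset.sum_add_distrib] using hsum

lemma norm_matMul_le (A B : Matrix (Fin n) (Fin n) ℝ) : ‖A * B‖ ≤ n * ‖A‖ * ‖B‖ := by
  rw [Matrix.norm_le_iff (by positivity)]
  intro i j
  calc ‖(A * B) i j‖ = ‖∑ k, A i k * B k j‖ := by rw [Matrix.mul_apply]
    _ ≤ ∑ k, ‖A i k * B k j‖ := norm_sum_le _ _
    _ ≤ ∑ _k : Fin n, ‖A‖ * ‖B‖ := by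
        refine Finset.sum_le_sum fun k _ => ?_
        rw [norm_mul]
        exact mul_le_mul (A.norm_entry_le_entrywise_sup_norm) (B.norm_entry_le_entrywise_sup_norm)
          (norm_nonneg _) (norm_nonneg _)
    _ = n * ‖A‖ * ‖B‖ := by simp [Finset.sum_const, mul_assoc]

lemma norm_transpose_le (A : Matrix (Fin n) (Fin n) ℝ) : ‖Aᵀ‖ ≤ ‖A‖ := by
  rw [Matrix.norm_le_iff (norm_nonneg A)]
  intro i j
  exact A.norm_entry_le_entrywise_sup_norm

lemma isClosed_posSemidef :
    IsClosed {S : Matrix (Fin n) (Fin n) ℝ | S.PosSemidef} := by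
  have h1 : IsClosed {S : Matrix (Fin n) (Fin n) ℝ | S.IsHermitian} := by
    have : {S : Matrix (Fin n) (Fin n) ℝ | S.IsHermitian} =
        ⋂ i, ⋂ j, {S : Matrix (Fin n) (Fin n) ℝ | S j i = S i j} := by
      ext S
      simp only [mem_setOf_eq, mem_iInter]
      constructor
      · intro h i j
        simpa using congrFun (congrFun h i) j
      · intro h
        ext i j
        simpa using h i j
    rw [this]
    refine isClosed_iInter fun i => isClosed_iInter fun j => isClosed_eq ?_ ?_
    · exact (continuous_apply i).comp (continuous_apply j)
    · exact (continuous_apply j).comp (continuous_apply i)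
  have h2 : ∀ v : Fin n → ℝ,
      IsClosed {S : Matrix (Fin n) (Fin n) ℝ | 0 ≤ dotProduct (star v) (S *ᵥ v)} := by
    intro v
    have hc : Continuous fun S : Matrix (Fin n) (Fin n) ℝ => dotProduct (star v) (S *ᵥ v) := by
      simp only [dotProduct, Matrix.mulVec, dotProduct]
      exact continuous_finset_sum _ fun i _ =>
        continuous_const.mul (continuous_finset_sum _ fun j _ =>
          ((((continuous_apply j).comp (continuous_apply i) : Continuous fun S : Matrix (Fin n) (Fin n) ℝ => S i j)).mul continuous_const))
    exact isClosed_le continuous_const hc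
  have : {S : Matrix (Fin n) (Fin n) ℝ | S.PosSemidef} =
      {S : Matrix (Fin n) (Fin n) ℝ | S.IsHermitian} ∩
        ⋂ v, {S : Matrix (Fin n) (Fin n) ℝ | 0 ≤ dotProduct (star v) (S *ᵥ v)} := by
    ext S
    simp only [mem_setOf_eq, mem_inter_iff, mem_iInter]
    exact ⟨fun h => ⟨h.1, (posSemidef_iff_dotProduct_mulVec.mp h).2⟩,
      fun h => posSemidef_iff_dotProduct_mulVec.mpr ⟨h.1, h.2⟩⟩
  rw [this]
  exact h1.inter (isClosed_iInter h2)

set_option maxHeartbeats 1000000 in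
/-- Key Lyapunov-type monotonicity lemma: if `Y' = -(MᵀY + YM)` on `[t₀, T)` and
`Y t₀` is PSD, then `Y t` is PSD throughout. -/
lemma lyapunov_psd {t₀ T : ℝ} (M Y Y' : ℝ → Matrix (Fin n) (Fin n) ℝ)
    (hM : ContinuousOn M (Ico t₀ T))
    (hd : ∀ t ∈ Ico t₀ T, HasDerivWithinAt Y (Y' t) (Ico t₀ T) t)
    (hode : ∀ t ∈ Ico t₀ T, Y' t = -((M t)ᵀ * Y t + Y t * M t))
    (h0 : (Y t₀).PosSemidef) :
    ∀ t ∈ Ico t₀ T, (Y t).PosSemidef := by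
  intro t₁ ht₁
  obtain ⟨ht₀t₁, ht₁T⟩ := ht₁
  set cone : Set (Matrix (Fin n) (Fin n) ℝ) := {S | S.PosSemidef} with hconedef
  have hcone : IsClosed cone := isClosed_posSemidef
  have hcone0 : cone.Nonempty := ⟨0, Matrix.PosSemidef.zero⟩
  have hsub : Icc t₀ t₁ ⊆ Ico t₀ T := fun s hs => ⟨hs.1, lt_of_le_of_lt hs.2 ht₁T⟩
  -- bound for M on the compact interval
  obtain ⟨C, hC⟩ := isCompact_Icc.exists_bound_of_continuousOn (hM.mono hsub)
  set K : ℝ := n * (max C 0) with hKdef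
  have hK0 : 0 ≤ K := by positivity
  have hKb : ∀ x ∈ Icc t₀ t₁, ∀ Z : Matrix (Fin n) (Fin n) ℝ,
      ‖(M x)ᵀ * Z‖ ≤ K * ‖Z‖ ∧ ‖Z * M x‖ ≤ K * ‖Z‖ := by
    intro x hx Z
    have hMx : ‖M x‖ ≤ max C 0 := le_trans (hC x hx) (le_max_left _ _)
    constructor
    · calc ‖(M x)ᵀ * Z‖ ≤ n * ‖(M x)ᵀ‖ * ‖Z‖ := norm_matMul_le _ _
        _ ≤ n * (max C 0) * ‖Z‖ := by
            have h5 := (norm_transpose_le (M x)).trans hMx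
            gcongr
        _ = K * ‖Z‖ := by rw [hKdef]
    · calc ‖Z * M x‖ ≤ n * ‖Z‖ * ‖M x‖ := norm_matMul_le _ _
        _ ≤ n * ‖Z‖ * (max C 0) := by
            gcongr
        _ = K * ‖Z‖ := by rw [hKdef]; ring
  -- continuity of Y on the compact interval
  have hYc : ContinuousOn Y (Icc t₀ t₁) := fun s hs =>
    ((hd s (hsub hs)).continuousWithinAt).mono hsub
  set f : ℝ → ℝ := fun t => infDist (Y t) cone with hfdef
  have hfc : ContinuousOn f (Icc t₀ t₁) :=
    (continuous_infDist_pt cone).comp_continuousOn hYc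
  have hf0 : f t₀ = 0 := infDist_zero_of_mem h0
  have hfnonneg : ∀ t, 0 ≤ f t := fun t => infDist_nonneg
  set K2 : ℝ := 2 * K + 1 with hK2def
  -- Gronwall-type bound
  have main : ∀ ε : ℝ, 0 < ε → f t₁ ≤ ε * Real.exp (K2 * (t₁ - t₀)) := by
    intro ε hε
    have := image_le_of_liminf_slope_right_lt_deriv_boundary'
      (f := f) (f' := fun x => 2 * K * f x) (a := t₀) (b := t₁)
      (B := fun t => ε * Real.exp (K2 * (t - t₀)))
      (B' := fun t => ε * (Real.exp (K2 * (t - t₀)) * K2))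
      hfc ?slope ?init ?Bc ?Bd ?bnd
    · exact this (right_mem_Icc.2 ht₀t₁)
    case init =>
      rw [hf0]; positivity
    case Bc =>
      fun_prop
    case Bd =>
      intro x _
      have h1 : HasDerivAt (fun t : ℝ => K2 * (t - t₀)) K2 x := by
        simpa using ((hasDerivAt_id x).sub_const t₀).const_mul K2
      exact ((h1.exp).const_mul ε).hasDerivWithinAt
    case bnd =>
      intro x _ hfx
      have hfx' : f x = ε * Real.exp (K2 * (x - t₀)) := hfx
      show 2 * K * f x < ε * (Real.exp (K2 * (x - t₀)) * K2)
      have hexp : 0 < Real.exp (K2 * (x - t₀)) := Real.exp_pos _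
      rw [hfx', hK2def]
      nlinarith
    case slope =>
      intro x hx r hr'
      have hr : 2 * K * f x < r := hr'
      have hxI : x ∈ Ico t₀ T := hsub (Ico_subset_Icc_self hx)
      have hxIcc : x ∈ Icc t₀ t₁ := Ico_subset_Icc_self hx
      -- nearest PSD point
      obtain ⟨P, hPcone, hPdist⟩ := hcone.exists_infDist_eq_dist hcone0 (Y x)
      have hPpsd : P.PosSemidef := hPcone
      set D : Matrix (Fin n) (Fin n) ℝ := Y x - P with hDdef
      have hfx : f x = ‖D‖ := by
        show infDist (Y x) cone = ‖D‖
        rw [hPdist, dist_eq_norm, ← hDdef]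
      set Mx := M x with hMxdef
      set U : Matrix (Fin n) (Fin n) ℝ := Mxᵀ * P * Mx with hUdef
      set ε₁ : ℝ := (r - 2 * K * f x) / 3 with hε₁def
      have hε₁ : 0 < ε₁ := by rw [hε₁def]; linarith
      -- little-o from the derivative
      have hlo := (hasDerivWithinAt_iff_isLittleO.1 (hd x hxI)).def hε₁
      have hmem : Ico t₀ T ∈ 𝓝[>] x :=
        mem_of_superset (Ioo_mem_nhdsGT_of_mem ⟨le_rfl, hxI.2⟩)
          (fun z hz => ⟨le_trans hxI.1 hz.1.le, hz.2⟩)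
      have hle : 𝓝[>] x ≤ 𝓝[Ico t₀ T] x := nhdsWithin_le_of_mem hmem
      have ev1 : ∀ᶠ z in 𝓝[>] x, ‖Y z - Y x - (z - x) • Y' x‖ ≤ ε₁ * ‖z - x‖ := hle hlo
      have ev2 : ∀ᶠ z in 𝓝[>] x, z < x + ε₁ / (‖U‖ + 1) := by
        have : Iio (x + ε₁ / (‖U‖ + 1)) ∈ 𝓝 x := by
          apply Iio_mem_nhds
          have : 0 < ε₁ / (‖U‖ + 1) := by positivity
          linarith
        exact eventually_nhdsWithin_of_eventually_nhds this
      have ev3 : ∀ᶠ z in 𝓝[>] x, x < z := eventually_mem_nhdsWithin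
      refine Filter.Eventually.frequently ?_
      filter_upwards [ev1, ev2, ev3] with z hz1 hz2 hz3
      have hh : 0 < z - x := by linarith
      have habs : ‖z - x‖ = z - x := by rw [Real.norm_eq_abs, abs_of_pos hh]
      have hhU : (z - x) * ‖U‖ ≤ ε₁ := by
        have h3 : 0 ≤ ‖U‖ := norm_nonneg _
        have h4 : (0:ℝ) < ‖U‖ + 1 := by linarith
        have h2 : z - x < ε₁ / (‖U‖ + 1) := by linarith
        have h5 : (z - x) * (‖U‖ + 1) < ε₁ := (lt_div_iff₀ h4).1 h2
        nlinarith
      -- the comparison point in the cone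
      set Bz : Matrix (Fin n) (Fin n) ℝ := 1 - (z - x) • Mx with hBzdef
      set Pz : Matrix (Fin n) (Fin n) ℝ := Bzᵀ * P * Bz with hPzdef
      have hPzcone : Pz ∈ cone := by
        have := hPpsd.conjTranspose_mul_mul_same Bz
        rwa [Matrix.conjTranspose_eq_transpose_of_trivial] at this
      have hfz : f z ≤ ‖Y z - Pz‖ := by
        show infDist (Y z) cone ≤ ‖Y z - Pz‖
        rw [← dist_eq_norm]
        exact infDist_le_dist_of_mem hPzcone
      -- decomposition
      have hPz : Pz = P - (z - x) • (Mxᵀ * P) - (z - x) • (P * Mx) +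
          ((z - x) * (z - x)) • U := by
        rw [hPzdef, hBzdef, hUdef]
        rw [Matrix.transpose_sub, Matrix.transpose_smul, Matrix.transpose_one]
        simp only [Matrix.sub_mul, Matrix.mul_sub, Matrix.smul_mul, Matrix.mul_smul,
          Matrix.one_mul, Matrix.mul_one, smul_smul, smul_sub]
        abel
      have hdecomp : Y z - Pz = (Y z - Y x - (z - x) • Y' x) + D +
          (z - x) • (-(Mxᵀ * D + D * Mx)) - ((z - x) * (z - x)) • U := by
        rw [hPz, hode x hxI, hDdef, hMxdef]
        simp only [Matrix.mul_sub, Matrix.sub_mul, smul_sub, smul_add, smul_neg, neg_add]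
        abel
      -- norm bounds
      have hKD1 : ‖Mxᵀ * D‖ ≤ K * ‖D‖ := ((hKb x hxIcc D).1)
      have hKD2 : ‖D * Mx‖ ≤ K * ‖D‖ := ((hKb x hxIcc D).2)
      have hb2 : ‖Y z - Pz‖ ≤ ε₁ * (z - x) + f x + (z - x) * (2 * K * f x) +
          (z - x) * ε₁ := by
        rw [hfx]
        rw [hdecomp]
        have t1 : ‖Y z - Y x - (z - x) • Y' x‖ ≤ ε₁ * (z - x) := by
          have t1' := hz1
          rw [habs] at t1'
          exact t1'
        have t2 : ‖(z - x) • (-(Mxᵀ * D + D * Mx))‖ ≤ (z - x) * (2 * K * ‖D‖) := by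
          rw [norm_smul, Real.norm_eq_abs, abs_of_pos hh, norm_neg]
          have htri := norm_add_le (Mxᵀ * D) (D * Mx)
          have hAB : ‖Mxᵀ * D + D * Mx‖ ≤ 2 * K * ‖D‖ := by linarith
          exact mul_le_mul_of_nonneg_left hAB hh.le
        have t3 : ‖((z - x) * (z - x)) • U‖ ≤ (z - x) * ε₁ := by
          rw [norm_smul, Real.norm_eq_abs,
            abs_of_pos (by nlinarith : (0:ℝ) < (z - x) * (z - x))]
          calc (z - x) * (z - x) * ‖U‖ = (z - x) * ((z - x) * ‖U‖) := by ring
            _ ≤ (z - x) * ε₁ := mul_le_mul_of_nonneg_left hhU hh.le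
        calc ‖(Y z - Y x - (z - x) • Y' x) + D + (z - x) • (-(Mxᵀ * D + D * Mx)) -
              ((z - x) * (z - x)) • U‖
            ≤ ‖(Y z - Y x - (z - x) • Y' x) + D + (z - x) • (-(Mxᵀ * D + D * Mx))‖ +
              ‖((z - x) * (z - x)) • U‖ := norm_sub_le _ _
          _ ≤ ‖(Y z - Y x - (z - x) • Y' x) + D‖ + ‖(z - x) • (-(Mxᵀ * D + D * Mx))‖ +
              ‖((z - x) * (z - x)) • U‖ := by
              have := norm_add_le ((Y z - Y x - (z - x) • Y' x) + D)
                ((z - x) • (-(Mxᵀ * D + D * Mx)))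
              linarith
          _ ≤ ‖Y z - Y x - (z - x) • Y' x‖ + ‖D‖ + ‖(z - x) • (-(Mxᵀ * D + D * Mx))‖ +
              ‖((z - x) * (z - x)) • U‖ := by
              have := norm_add_le (Y z - Y x - (z - x) • Y' x) D
              linarith
          _ ≤ ε₁ * (z - x) + ‖D‖ + (z - x) * (2 * K * ‖D‖) + (z - x) * ε₁ := by
              linarith
      -- conclude slope bound
      have hfin : 2 * K * f x + 2 * ε₁ < r := by rw [hε₁def]; linarith
      have hmul : (z - x) * (2 * K * f x + 2 * ε₁) < (z - x) * r :=
        mul_lt_mul_of_pos_left hfin hh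
      rw [slope_def_field, div_lt_iff₀ hh]
      have hfz2 := hfz.trans hb2
      nlinarith
  -- conclude `f t₁ = 0`
  have hft₁ : f t₁ = 0 := by
    have hle0 : f t₁ ≤ 0 := by
      by_contra hpos
      push_neg at hpos
      have hc : 0 < Real.exp (K2 * (t₁ - t₀)) := Real.exp_pos _
      have h1 := main (f t₁ / (2 * Real.exp (K2 * (t₁ - t₀)))) (by positivity)
      have h2 : f t₁ / (2 * Real.exp (K2 * (t₁ - t₀))) * Real.exp (K2 * (t₁ - t₀))
          = f t₁ / 2 := by
        field_simp
      nlinarith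
    exact le_antisymm hle0 (hfnonneg t₁)
  have : Y t₁ ∈ cone := (hcone.mem_iff_infDist_zero hcone0).2 hft₁
  exact this

end RiccatiAux

open RiccatiAux

set_option maxHeartbeats 1000000 in
/-- Solutions of constant-coefficient symmetric matrix Riccati equations are monotone:
the Loewner sign of the derivative at the initial time propagates to later times. -/
theorem riccati_const_coeff_monotone (n : ℕ) (t₀ T : ℝ)
    (A B Q : Matrix (Fin n) (Fin n) ℝ) (hB : B.IsSymm) (hQ : Q.IsSymm)
    (X X' : ℝ → Matrix (Fin n) (Fin n) ℝ)
    (hXs : ∀ t ∈ Ico t₀ T, (X t).IsSymm)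
    (hd : ∀ t ∈ Ico t₀ T, ∀ i j,
      HasDerivWithinAt (fun s => X s i j) (X' t i j) (Ico t₀ T) t)
    (heq : ∀ t ∈ Ico t₀ T, X' t + Aᵀ * X t + X t * A + B + X t * Q * X t = 0) :
    ((X' t₀).PosSemidef → ∀ t ∈ Ico t₀ T, (X' t).PosSemidef) ∧
    ((-X' t₀).PosSemidef → ∀ t ∈ Ico t₀ T, (-X' t).PosSemidef) := by
  set M : ℝ → Matrix (Fin n) (Fin n) ℝ := fun t => A + Q * X t with hMdef
  -- matrix-level derivative of X
  have hXd : ∀ t ∈ Ico t₀ T, HasDerivWithinAt X (X' t) (Ico t₀ T) t := fun t ht =>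
    hasDerivWithinAt_matrix.2 (hd t ht)
  have hXc : ContinuousOn X (Ico t₀ T) := fun s hs => (hXd s hs).continuousWithinAt
  -- X' equals a nice function of X on the interval
  have hX'eq : ∀ t ∈ Ico t₀ T,
      X' t = -(Aᵀ * X t + X t * A + B + X t * Q * X t) := by
    intro t ht
    have h := heq t ht
    have h2 : X' t + (Aᵀ * X t + X t * A + B + X t * Q * X t) = 0 := by
      rw [← h]; abel
    exact eq_neg_of_add_eq_zero_left h2
  -- derivative of X'
  set Yd : ℝ → Matrix (Fin n) (Fin n) ℝ := fun t =>
    -(Aᵀ * X' t + X' t * A + (X' t * Q * X t + X t * Q * X' t)) with hYddef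
  have hX'd : ∀ t ∈ Ico t₀ T, HasDerivWithinAt X' (Yd t) (Ico t₀ T) t := by
    intro t ht
    have h1 : HasDerivWithinAt (fun u => Aᵀ * X u) (Aᵀ * X' t) (Ico t₀ T) t := by
      have := hasDerivWithinAt_matMul (f := fun _ => Aᵀ) (f' := fun _ => 0)
        (g := X) (g' := X') (hasDerivWithinAt_const t _ Aᵀ) (hXd t ht)
      simpa using this
    have h2 : HasDerivWithinAt (fun u => X u * A) (X' t * A) (Ico t₀ T) t := by
      have := hasDerivWithinAt_matMul (f := X) (f' := X')
        (g := fun _ => A) (g' := fun _ => 0) (hXd t ht) (hasDerivWithinAt_const t _ A)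
      simpa using this
    have h3 : HasDerivWithinAt (fun u => X u * Q) (X' t * Q) (Ico t₀ T) t := by
      have := hasDerivWithinAt_matMul (f := X) (f' := X')
        (g := fun _ => Q) (g' := fun _ => 0) (hXd t ht) (hasDerivWithinAt_const t _ Q)
      simpa using this
    have h4 : HasDerivWithinAt (fun u => X u * Q * X u)
        (X' t * Q * X t + X t * Q * X' t) (Ico t₀ T) t := by
      have := hasDerivWithinAt_matMul (f := fun u => X u * Q) (f' := fun u => X' u * Q)
        (g := X) (g' := X') h3 (hXd t ht)
      simpa using this
    have hg : HasDerivWithinAt (fun u => -(Aᵀ * X u + X u * A + B + X u * Q * X u))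
        (Yd t) (Ico t₀ T) t := by
      rw [hYddef]
      have := (((h1.add h2).add (hasDerivWithinAt_const t _ B)).add h4).neg
      convert this using 1
      · rfl
      · rfl
      · rfl
      · funext u; simp [add_assoc]
      · simp
    exact hg.congr (fun y hy => hX'eq y hy) (hX'eq t ht)
  -- the linear ODE for X'
  have hode : ∀ t ∈ Ico t₀ T, Yd t = -((M t)ᵀ * X' t + X' t * M t) := by
    intro t ht
    have hQX : (Q * X t)ᵀ = X t * Q := by
      rw [Matrix.transpose_mul, (hXs t ht).eq, hQ.eq]
    rw [hYddef, hMdef]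
    simp only [Matrix.transpose_add, hQX, Matrix.add_mul, Matrix.mul_add]
    rw [Matrix.mul_assoc (X t) Q (X' t), ← Matrix.mul_assoc (X' t) Q (X t)]
    abel_nf
  -- continuity of M
  have hMc : ContinuousOn M (Ico t₀ T) := by
    have hF : Continuous fun S : Matrix (Fin n) (Fin n) ℝ => A + Q * S := by
      refine continuous_pi fun i => continuous_pi fun j => ?_
      simp only [Matrix.add_apply, Matrix.mul_apply]
      exact continuous_const.add (continuous_finset_sum _ fun k _ =>
        continuous_const.mul ((continuous_apply j).comp (continuous_apply k)))
    exact hF.comp_continuousOn hXc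
  constructor
  · intro hpsd
    exact lyapunov_psd M X' Yd hMc hX'd hode hpsd
  · intro hpsd
    have hd' : ∀ t ∈ Ico t₀ T, HasDerivWithinAt (fun u => -X' u) (-Yd t) (Ico t₀ T) t :=
      fun t ht => (hX'd t ht).neg
    have hode' : ∀ t ∈ Ico t₀ T,
        -Yd t = -((M t)ᵀ * (-X' t) + (-X' t) * M t) := by
      intro t ht
      rw [hode t ht]
      simp only [Matrix.mul_neg, Matrix.neg_mul, neg_add_rev, neg_neg]
      abel
    have := lyapunov_psd M (fun u => -X' u) (fun u => -Yd u) hMc hd' hode' hpsd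
    intro t ht
    simpa using this t ht
end

section
/- Let $X_0, X_1, X_2$ be vector fields spanning the Lie algebra of a 3D Lie group with brackets $[X_1,X_0] = (\chi+\kappa)X_2$, $[X_2,X_0] = (\chi-\kappa)X_1$, $[X_2,X_1] = X_0$, and let $h_i$ be the corresponding linear-on-fibers Hamiltonians with Poisson brackets $\{h_1, h_0\} = (\chi+\kappa)h_2$, $\{h_2,h_0\} = (\chi-\kappa)h_1$, $\{h_2,h_1\} = h_0$. Set $H = \frac12(h_1^2 + h_2^2)$ and $E = \frac{h_0^2}{2\chi} + h_2^2$ (with $\chi \neq 0$). Then $\{H, E\} = 0$. -/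
/-- `E = h₀²/(2χ) + h₂²` is a constant of the motion: `{H, E} = 0` for the
sub-Riemannian Hamiltonian `H = (h₁² + h₂²)/2` on a 3D unimodular Lie group with
Poisson bracket relations `{h₁,h₀} = (χ+κ)h₂`, `{h₂,h₀} = (χ-κ)h₁`, `{h₂,h₁} = h₀`. -/
theorem E_is_constant_of_motion
    (R : Type*) [CommRing R] [Algebra ℝ R]
    (P : R →ₗ[ℝ] R →ₗ[ℝ] R)
    (hanti : ∀ f g : R, P f g = -P g f)
    (hleib : ∀ f g h : R, P f (g * h) = P f g * h + g * P f h)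
    (χ κ : ℝ) (hχ : χ ≠ 0)
    (h₀ h₁ h₂ : R)
    (h10 : P h₁ h₀ = (χ + κ) • h₂)
    (h20 : P h₂ h₀ = (χ - κ) • h₁)
    (h21 : P h₂ h₁ = h₀) :
    P ((1 / 2 : ℝ) • (h₁ * h₁ + h₂ * h₂))
      ((1 / (2 * χ) : ℝ) • (h₀ * h₀) + h₂ * h₂) = 0 := by
  have pself : ∀ f : R, P f f = 0 := by
    intro f
    have h := hanti f f
    have h2 : (2 : ℝ) • P f f = 0 := by
      rw [two_smul]
      linear_combination h
    simpa using smul_eq_zero.mp h2 |>.resolve_left (by norm_num)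
  set H : R := (1 / 2 : ℝ) • (h₁ * h₁ + h₂ * h₂) with hH
  have PH0 : P H h₀ = (2 * χ) • (h₁ * h₂) := by
    have e1 : P (h₁ * h₁) h₀ = (χ + κ) • (h₂ * h₁ + h₁ * h₂) := by
      rw [hanti, hleib, hanti h₀ h₁, h10]
      simp [smul_add, smul_mul_assoc, mul_smul_comm]
      abel
    have e2 : P (h₂ * h₂) h₀ = (χ - κ) • (h₁ * h₂ + h₂ * h₁) := by
      rw [hanti, hleib, hanti h₀ h₂, h20]
      simp [smul_add, smul_mul_assoc, mul_smul_comm]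
      abel
    rw [hH]
    simp only [map_add, map_smul, LinearMap.add_apply, LinearMap.smul_apply, e1, e2]
    rw [mul_comm h₂ h₁]
    module
  have PH2 : P H h₂ = -(h₀ * h₁) := by
    have e1 : P (h₁ * h₁) h₂ = -(h₀ * h₁ + h₁ * h₀) := by
      rw [hanti, hleib, h21]
    have e2 : P (h₂ * h₂) h₂ = 0 := by
      rw [hanti, hleib, pself]
      ring
    rw [hH]
    simp only [map_add, map_smul, LinearMap.add_apply, LinearMap.smul_apply, e1, e2]
    rw [mul_comm h₁ h₀, add_zero, smul_neg]
    module
  rw [map_add, map_smul, hleib, hleib, PH0, PH2]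
  rw [smul_mul_assoc, mul_smul_comm, smul_add, smul_smul, smul_smul]
  have hc : 1 / (2 * χ) * (2 * χ) = 1 := by field_simp
  rw [hc, one_smul, one_smul]
  ring
end
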